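/- arXiv:1607.02466 — 2 statements merged into one kernel-verified Lean document; each statement's English description precedes it below -/
import Mathlib

section
/- Every minimizer uses the lowest eligible value: if n ≥ 1 and d* is a minimizer, then there exists an index i such that d* i equals the minimum of the values m j over all j : Fin n. -/
/-!
If some lower bound `m j` were not a value of the minimizer `d*`, then `d* j > m j`, and
lowering `d* j` to `m j` keeps the assignment injective and feasible while strictly decreasing
the objective, because `a j > 0`. So every `m j`, in particular the smallest one, is a value
of `d*`.
-/

open Function Finset

theorem Function.Injective.update_of_notMem_range {α β : Type*} [DecidableEq α] {f : α → β}
    (hf : Injective f) (a : α) {b : β} (hb : b ∉ Set.range f) : Injective (update f a b) := by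
  intro x y hxy
  rcases eq_or_ne x a with rfl | hx <;> rcases eq_or_ne y x with rfl | hyx
  · rfl
  · rw [update_self, update_of_ne hyx] at hxy
    exact absurd ⟨y, hxy.symm⟩ hb
  · rfl
  rcases eq_or_ne y a with rfl | hy
  · rw [update_self, update_of_ne hx] at hxy
    exact absurd ⟨x, hxy⟩ hb
  · rw [update_of_ne hx, update_of_ne hy] at hxy
    exact hf hxy

section WeightedAssignment

variable {ι R : Type*} [Fintype ι] [DecidableEq ι] [Semiring R] [PartialOrder R]
  [IsStrictOrderedRing R]

theorem sum_mul_update_lt {a d : ι → R} {j : ι} (haj : 0 < a j) {v : R} (hv : v < d j) :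
    ∑ i, a i * update d j v i < ∑ i, a i * d i := by
  refine sum_lt_sum (fun i _ => ?_) ⟨j, mem_univ j, ?_⟩
  · rcases eq_or_ne i j with rfl | hij
    · rw [update_self]
      exact mul_le_mul_of_nonneg_left hv.le haj.le
    · rw [update_of_ne hij]
  · rw [update_self]
    exact mul_lt_mul_of_pos_left hv haj

theorem lowerBound_mem_range_of_minimizer {a m dstar : ι → R} (ha : ∀ i, 0 < a i)
    (hfeas : Injective dstar ∧ ∀ i, m i ≤ dstar i)
    (hmin : ∀ d : ι → R, Injective d → (∀ i, m i ≤ d i) →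
      ∑ i, a i * dstar i ≤ ∑ i, a i * d i)
    (j : ι) : m j ∈ Set.range dstar := by
  by_contra hj
  have hlt : m j < dstar j := (hfeas.2 j).lt_of_ne fun h => hj ⟨j, h.symm⟩
  have hlower : ∀ i, m i ≤ update dstar j (m j) i := by
    intro i
    rcases eq_or_ne i j with rfl | hij
    · rw [update_self]
    · rw [update_of_ne hij]
      exact hfeas.2 i
  exact (hmin _ (hfeas.1.update_of_notMem_range j hj) hlower).not_gt
    (sum_mul_update_lt (ha j) hlt)

end WeightedAssignment

/-- Every minimizer uses the lowest eligible value: some variable is assigned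
the minimum of the lower bounds `m j`. -/
theorem stmt_3 (n : ℕ) (hn : 1 ≤ n) (a m : Fin n → ℤ) (ha : ∀ i, 0 < a i)
    (dstar : Fin n → ℤ)
    (hfeas : Function.Injective dstar ∧ ∀ i, m i ≤ dstar i)
    (hmin : ∀ d : Fin n → ℤ, Function.Injective d → (∀ i, m i ≤ d i) →
      ∑ i, a i * dstar i ≤ ∑ i, a i * d i) :
    ∃ i : Fin n, dstar i = Finset.univ.inf' ⟨⟨0, hn⟩, Finset.mem_univ _⟩ m := by
  obtain ⟨j, -, hj⟩ := exists_mem_eq_inf' ⟨⟨0, hn⟩, mem_univ _⟩ m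
  obtain ⟨i, hi⟩ := lowerBound_mem_range_of_minimizer ha hfeas hmin j
  exact ⟨i, hi.trans hj.symm⟩
end

section
/- Exchange property of maximizers: if d* is a maximizer, i and j are distinct indices with a j < a i, and d* j ≤ M i, then d* j < d* i (in a maximizing assignment, among two variables that are both eligible for the larger of their two values, the variable with the greater coefficient must receive the larger value). -/
/-! If `d* i < d* j`, swapping the two values keeps the assignment injective and within the
bounds (the value `d* j` moves to `i`, where `d* j ≤ M i`; the smaller value `d* i` moves to `j`),
and it raises the objective by `(a i - a j) * (d* j - d* i) > 0`, contradicting maximality. -/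

open Finset Equiv

theorem sum_mul_comp_swap {ι R : Type*} [Fintype ι] [DecidableEq ι] [CommRing R]
    (a d : ι → R) {i j : ι} (hij : i ≠ j) :
    ∑ k, a k * d (swap i j k) = ∑ k, a k * d k + (a i - a j) * (d j - d i) := by
  have hdiff : ∑ k, (a k * d (swap i j k) - a k * d k)
      = (a i * d j - a i * d i) + (a j * d i - a j * d j) := by
    rw [Fintype.sum_eq_add i j hij fun k ⟨hki, hkj⟩ => by
      rw [swap_apply_of_ne_of_ne hki hkj, sub_self]]
    simp only [swap_apply_left, swap_apply_right]
  rw [sum_sub_distrib, sub_eq_iff_eq_add'] at hdiff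
  rw [hdiff]
  ring

theorem comp_swap_le_of_le {ι α : Type*} [DecidableEq ι] [Preorder α] {d M : ι → α}
    (hle : ∀ k, d k ≤ M k) {i j : ι} (hdij : d i ≤ d j) (helig : d j ≤ M i) (k : ι) :
    d (swap i j k) ≤ M k := by
  rcases eq_or_ne k i with rfl | hki
  · simpa using helig
  rcases eq_or_ne k j with rfl | hkj
  · simpa using hdij.trans (hle k)
  · simpa [swap_apply_of_ne_of_ne hki hkj] using hle k

theorem stmt_9_general (n : ℕ) (a M : Fin n → ℤ)
    (dstar : Fin n → ℤ)
    (hfeas : Function.Injective dstar ∧ ∀ i, dstar i ≤ M i)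
    (hmax : ∀ d : Fin n → ℤ, Function.Injective d → (∀ i, d i ≤ M i) →
      ∑ i, a i * d i ≤ ∑ i, a i * dstar i)
    (i j : Fin n) (hij : i ≠ j) (hcoef : a j < a i) (helig : dstar j ≤ M i) :
    dstar j < dstar i := by
  obtain ⟨hinj, hle⟩ := hfeas
  by_contra! hji
  have hlt : dstar i < dstar j := hji.lt_of_ne fun h => hij (hinj h)
  have hswap := hmax (dstar ∘ swap i j) (hinj.comp (swap i j).injective)
    (comp_swap_le_of_le hle hlt.le helig)
  rw [Function.comp_def, sum_mul_comp_swap a dstar hij] at hswap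
  linarith [mul_pos (sub_pos.2 hcoef) (sub_pos.2 hlt)]

/-- Exchange property of maximizers: if `a j < a i` and `d* j ≤ M i`, then
`d* j < d* i`. -/
theorem stmt_9 (n : ℕ) (a M : Fin n → ℤ) (ha : ∀ i, 0 < a i)
    (dstar : Fin n → ℤ)
    (hfeas : Function.Injective dstar ∧ ∀ i, dstar i ≤ M i)
    (hmax : ∀ d : Fin n → ℤ, Function.Injective d → (∀ i, d i ≤ M i) →
      ∑ i, a i * d i ≤ ∑ i, a i * dstar i)
    (i j : Fin n) (hij : i ≠ j) (hcoef : a j < a i) (helig : dstar j ≤ M i) :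
    dstar j < dstar i :=
  stmt_9_general n a M dstar hfeas hmax i j hij hcoef helig
end
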